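/- arXiv:1609.06327 — 3 statements merged into one kernel-verified Lean document; each statement's English description precedes it below -/
import Mathlib

section
/- Every saturated independent set of the conflict graph G_AM2, interpreted as an activity set by taking the candidates in the independent set as activity intervals, is a valid activity set of the temporal labeling instance satisfying activity model AM2. -/
noncomputable section

/-- A temporal labeling instance `(L, Ψ, C)`: a finite set `L` of labels with positive
weights, for each label a finite set `P ℓ` of pairwise disjoint closed presence intervals
(encoded as pairs `(a,b)` with `a ≤ b`, standing for `[a,b] ⊆ ℝ`), and for each pair of
distinct labels a finite set `C ℓ ℓ'` of closed conflict intervals, each contained in some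
presence interval of `ℓ` (and, by symmetry of `C`, of `ℓ'`). -/
structure TLInstance (L : Type) [Fintype L] [DecidableEq L] where
  w : L → ℝ
  w_pos : ∀ ℓ, 0 < w ℓ
  P : L → Finset (ℝ × ℝ)
  P_wf : ∀ ℓ, ∀ p ∈ P ℓ, p.1 ≤ p.2
  P_disj : ∀ ℓ, ∀ p ∈ P ℓ, ∀ q ∈ P ℓ, p ≠ q →
    Disjoint (Set.Icc p.1 p.2) (Set.Icc q.1 q.2)
  C : L → L → Finset (ℝ × ℝ)
  C_symm : ∀ ℓ ℓ', C ℓ ℓ' = C ℓ' ℓ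
  C_self : ∀ ℓ, C ℓ ℓ = ∅
  C_wf : ∀ ℓ ℓ', ∀ c ∈ C ℓ ℓ', c.1 ≤ c.2
  C_sub : ∀ ℓ ℓ', ∀ c ∈ C ℓ ℓ', ∃ p ∈ P ℓ, p.1 ≤ c.1 ∧ c.2 ≤ p.2

namespace TLInstance

variable {L : Type} [Fintype L] [DecidableEq L] (T : TLInstance L)

/-- Intervals `A` of label `ℓ` and `B` of label `ℓ'` are in conflict: some time `t` in the
intersection of the open intervals `(A.1,A.2) ∩ (B.1,B.2)` lies in a conflict interval of
`ℓ` and `ℓ'`. -/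
def InConflict (ℓ ℓ' : L) (A B : ℝ × ℝ) : Prop :=
  ∃ t : ℝ, A.1 < t ∧ t < A.2 ∧ B.1 < t ∧ t < B.2 ∧
    ∃ d ∈ T.C ℓ ℓ', d.1 ≤ t ∧ t ≤ d.2

/-- An activity set `Φ` (a finite set of closed activity intervals for each label)
is valid: (R1) every activity interval of `ℓ` is contained in some presence interval
of `ℓ`; (R2) each presence interval of `ℓ` contains at most one activity interval of `ℓ`;
(R3) no two activity intervals of distinct labels are in conflict. -/
def Valid (Φ : L → Finset (ℝ × ℝ)) : Prop :=
  (∀ ℓ, ∀ A ∈ Φ ℓ, A.1 ≤ A.2 ∧ ∃ p ∈ T.P ℓ, p.1 ≤ A.1 ∧ A.2 ≤ p.2) ∧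
  (∀ ℓ, ∀ p ∈ T.P ℓ, ∀ A ∈ Φ ℓ, ∀ B ∈ Φ ℓ,
    p.1 ≤ A.1 → A.2 ≤ p.2 → p.1 ≤ B.1 → B.2 ≤ p.2 → A = B) ∧
  (∀ ℓ ℓ', ℓ ≠ ℓ' → ∀ A ∈ Φ ℓ, ∀ B ∈ Φ ℓ', ¬ T.InConflict ℓ ℓ' A B)

/-- Every activity interval `A` of `ℓ`, contained in presence interval `p` of `ℓ`, is
justified: its start equals `p.1` or there is a witness label `ℓ'` with an activity
interval containing `A.1` and a conflict interval of `ℓ` and `ℓ'` with right endpoint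
`A.1`; symmetrically for its end. -/
def Justified (Φ : L → Finset (ℝ × ℝ)) : Prop :=
  ∀ ℓ, ∀ A ∈ Φ ℓ, ∀ p ∈ T.P ℓ, p.1 ≤ A.1 → A.2 ≤ p.2 →
    (A.1 = p.1 ∨ ∃ ℓ', ℓ' ≠ ℓ ∧ (∃ B ∈ Φ ℓ', B.1 ≤ A.1 ∧ A.1 ≤ B.2) ∧
      ∃ d ∈ T.C ℓ ℓ', d.2 = A.1) ∧
    (A.2 = p.2 ∨ ∃ ℓ', ℓ' ≠ ℓ ∧ (∃ B ∈ Φ ℓ', B.1 ≤ A.2 ∧ A.2 ≤ B.2) ∧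
      ∃ d ∈ T.C ℓ ℓ', d.1 = A.2)

/-- Activity model AM3: the activity set is valid and every activity interval is justified. -/
def AM3 (Φ : L → Finset (ℝ × ℝ)) : Prop := T.Valid Φ ∧ T.Justified Φ

/-- Activity model AM2: AM3, and moreover every activity interval of `ℓ` starts at the
left endpoint of the presence interval of `ℓ` containing it. -/
def AM2 (Φ : L → Finset (ℝ × ℝ)) : Prop :=
  T.AM3 Φ ∧ ∀ ℓ, ∀ A ∈ Φ ℓ, ∀ p ∈ T.P ℓ, p.1 ≤ A.1 → A.2 ≤ p.2 → A.1 = p.1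

/-- Activity model AM1: AM3, and moreover every activity interval of `ℓ` equals a presence
interval of `ℓ`. -/
def AM1 (Φ : L → Finset (ℝ × ℝ)) : Prop :=
  T.AM3 Φ ∧ ∀ ℓ, ∀ A ∈ Φ ℓ, A ∈ T.P ℓ

/-- The total weight of an activity set: the sum over all activity intervals `[a,b]` of a
label `ℓ` of `(b - a) * w ℓ`. -/
def weightOf (Φ : L → Finset (ℝ × ℝ)) : ℝ :=
  ∑ ℓ : L, ∑ A ∈ Φ ℓ, (A.2 - A.1) * T.w ℓ

/-- `A = [s,t]` is a candidate of the presence interval `p = [a,b]` of label `ℓ`: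
`[s,t] ⊆ [a,b]`, `s ≤ t`, `s = a` or `s` is the right endpoint of a conflict interval of
`ℓ` contained in `[a,b]`, and `t = b` or `t` is the left endpoint of a conflict interval
of `ℓ` contained in `[a,b]`. -/
def IsCandidate (ℓ : L) (p A : ℝ × ℝ) : Prop :=
  p ∈ T.P ℓ ∧ A.1 ≤ A.2 ∧ p.1 ≤ A.1 ∧ A.2 ≤ p.2 ∧
  (A.1 = p.1 ∨ ∃ ℓ', ∃ d ∈ T.C ℓ ℓ', p.1 ≤ d.1 ∧ d.2 ≤ p.2 ∧ d.2 = A.1) ∧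
  (A.2 = p.2 ∨ ∃ ℓ', ∃ d ∈ T.C ℓ ℓ', p.1 ≤ d.1 ∧ d.2 ≤ p.2 ∧ d.1 = A.2)

/-- The vertices of the conflict graph `G_AM3`: triples (label, presence interval,
candidate interval). -/
abbrev Vtx := {x : L × (ℝ × ℝ) × (ℝ × ℝ) // T.IsCandidate x.1 x.2.1 x.2.2}

/-- Two vertices belong to the same cluster: same label and same presence interval. -/
def SameCluster (u v : T.Vtx) : Prop := u.1.1 = v.1.1 ∧ u.1.2.1 = v.1.2.1

/-- Adjacency in the conflict graph `G_AM3`: two distinct candidates of the same presence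
interval are adjacent, and two candidates of distinct labels are adjacent iff some time in
the intersection of their open intervals lies in a conflict interval of the two labels. -/
def Adj (u v : T.Vtx) : Prop :=
  u ≠ v ∧ (T.SameCluster u v ∨
    (u.1.1 ≠ v.1.1 ∧ T.InConflict u.1.1 v.1.1 u.1.2.2 v.1.2.2))

/-- `I` is an independent set of the conflict graph `G_AM3`. -/
def IsIndep (I : Finset T.Vtx) : Prop := ∀ u ∈ I, ∀ v ∈ I, ¬ T.Adj u v

/-- Total vertex weight of a set of vertices of `G_AM3`; the weight of the vertex of
candidate `[s,t]` of label `ℓ` is `(t - s) * w ℓ`. -/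
def wsum (I : Finset T.Vtx) : ℝ := ∑ v ∈ I, (v.1.2.2.2 - v.1.2.2.1) * T.w v.1.1

/-- `I` is saturated: there are no vertices `v ∈ I` and `v' ∉ I` in the same cluster such
that exchanging `v` for `v'` yields an independent set of strictly larger total weight. -/
def Saturated (I : Finset T.Vtx) : Prop :=
  ¬ ∃ v ∈ I, ∃ v' : T.Vtx, v' ∉ I ∧ T.SameCluster v v' ∧
    T.IsIndep (insert v' (I.erase v)) ∧ T.wsum I < T.wsum (insert v' (I.erase v))

/-- The activity set obtained from a set `I` of vertices of `G_AM3` by taking the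
candidates in `I` as activity intervals. -/
def toActivity (I : Finset T.Vtx) (ℓ : L) : Finset (ℝ × ℝ) :=
  (I.filter (fun v => v.1.1 = ℓ)).image (fun v => v.1.2.2)

end TLInstance

namespace TLInstance

variable {L : Type} [Fintype L] [DecidableEq L] (T : TLInstance L)

/-- Candidates of the conflict graph `G_AM2`: candidates starting at the left endpoint of
their presence interval. -/
def IsCandidate2 (ℓ : L) (p A : ℝ × ℝ) : Prop := T.IsCandidate ℓ p A ∧ A.1 = p.1

/-- The vertices of the conflict graph `G_AM2`. -/
abbrev Vtx2 := {x : L × (ℝ × ℝ) × (ℝ × ℝ) // T.IsCandidate2 x.1 x.2.1 x.2.2}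

/-- Same cluster in `G_AM2`: same label and same presence interval. -/
def SameCluster2 (u v : T.Vtx2) : Prop := u.1.1 = v.1.1 ∧ u.1.2.1 = v.1.2.1

/-- Adjacency in the conflict graph `G_AM2`. -/
def Adj2 (u v : T.Vtx2) : Prop :=
  u ≠ v ∧ (T.SameCluster2 u v ∨
    (u.1.1 ≠ v.1.1 ∧ T.InConflict u.1.1 v.1.1 u.1.2.2 v.1.2.2))

/-- `I` is an independent set of `G_AM2`. -/
def IsIndep2 (I : Finset T.Vtx2) : Prop := ∀ u ∈ I, ∀ v ∈ I, ¬ T.Adj2 u v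

/-- Total vertex weight in `G_AM2`. -/
def wsum2 (I : Finset T.Vtx2) : ℝ := ∑ v ∈ I, (v.1.2.2.2 - v.1.2.2.1) * T.w v.1.1

/-- `I` is a saturated set of vertices of `G_AM2`. -/
def Saturated2 (I : Finset T.Vtx2) : Prop :=
  ¬ ∃ v ∈ I, ∃ v' : T.Vtx2, v' ∉ I ∧ T.SameCluster2 v v' ∧
    T.IsIndep2 (insert v' (I.erase v)) ∧ T.wsum2 I < T.wsum2 (insert v' (I.erase v))

/-- The activity set obtained from a set of vertices of `G_AM2`. -/
def toActivity2 (I : Finset T.Vtx2) (ℓ : L) : Finset (ℝ × ℝ) :=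
  (I.filter (fun v => v.1.1 = ℓ)).image (fun v => v.1.2.2)

end TLInstance

/-!
A candidate `[a,s]` in a saturated independent set whose end is not justified can be
prolonged to `[a,t']`, where `t'` is the first left endpoint of a conflict interval of its
label after `s` (or the end of the presence interval). A conflict of the prolonged interval
with another chosen interval `B` happens at a time `t ≥ s` inside a conflict interval `d`
starting at or before `s`; if `d` starts before `s` then `[a,s]` already conflicts with `B`,
and if `d` starts exactly at `s` then `B` witnesses the end of `[a,s]`. So the exchange
keeps the set independent and strictly increases its weight, contradicting saturation.
-/

namespace TLInstance

variable {L : Type} [Fintype L] [DecidableEq L] (T : TLInstance L)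

lemma eq_of_mem_P_of_mem_Icc {ℓ : L} {p q : ℝ × ℝ} (hp : p ∈ T.P ℓ) (hq : q ∈ T.P ℓ)
    {x : ℝ} (hxp : x ∈ Set.Icc p.1 p.2) (hxq : x ∈ Set.Icc q.1 q.2) : p = q := by
  by_contra hpq
  exact Set.disjoint_left.1 (T.P_disj ℓ p hp q hq hpq) hxp hxq

lemma C_subset_P {ℓ ℓ' : L} {d p : ℝ × ℝ} (hd : d ∈ T.C ℓ ℓ') (hp : p ∈ T.P ℓ) {t : ℝ}
    (htd : t ∈ Set.Icc d.1 d.2) (htp : t ∈ Set.Icc p.1 p.2) : p.1 ≤ d.1 ∧ d.2 ≤ p.2 := by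
  obtain ⟨q, hq, hqd₁, hqd₂⟩ := T.C_sub ℓ ℓ' d hd
  obtain rfl : q = p :=
    T.eq_of_mem_P_of_mem_Icc hq hp ⟨hqd₁.trans htd.1, htd.2.trans hqd₂⟩ htp
  exact ⟨hqd₁, hqd₂⟩

variable {T} in
lemma InConflict.symm {ℓ ℓ' : L} {A B : ℝ × ℝ} (h : T.InConflict ℓ ℓ' A B) :
    T.InConflict ℓ' ℓ B A := by
  obtain ⟨t, hA₁, hA₂, hB₁, hB₂, d, hd, hdt, htd⟩ := h
  exact ⟨t, hB₁, hB₂, hA₁, hA₂, d, T.C_symm ℓ ℓ' ▸ hd, hdt, htd⟩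

variable {T} in
lemma Adj2.symm {u v : T.Vtx2} (h : T.Adj2 u v) : T.Adj2 v u := by
  obtain ⟨huv, ⟨hℓ, hp⟩ | ⟨hℓ, hconf⟩⟩ := h
  · exact ⟨huv.symm, Or.inl ⟨hℓ.symm, hp.symm⟩⟩
  · exact ⟨huv.symm, Or.inr ⟨hℓ.symm, hconf.symm⟩⟩

lemma mem_toActivity2 {I : Finset T.Vtx2} {ℓ : L} {A : ℝ × ℝ} :
    A ∈ T.toActivity2 I ℓ ↔ ∃ u ∈ I, u.1.1 = ℓ ∧ u.1.2.2 = A := by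
  simp [toActivity2, and_assoc]

lemma exists_mk_mem_of_mem_toActivity2 {I : Finset T.Vtx2} {ℓ : L} {A p : ℝ × ℝ}
    (hA : A ∈ T.toActivity2 I ℓ) (hp : p ∈ T.P ℓ) (hpA₁ : p.1 ≤ A.1) (hpA₂ : A.2 ≤ p.2) :
    ∃ hc : T.IsCandidate2 ℓ p A, (⟨(ℓ, p, A), hc⟩ : T.Vtx2) ∈ I := by
  obtain ⟨⟨⟨_, q, _⟩, hc⟩, hu, rfl, rfl⟩ := T.mem_toActivity2.1 hA
  obtain ⟨⟨hq, hle, hqA₁, hqA₂, -⟩, -⟩ := id hc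
  obtain rfl : q = p :=
    T.eq_of_mem_P_of_mem_Icc hq hp ⟨hqA₁, hle.trans hqA₂⟩ ⟨hpA₁, hle.trans hpA₂⟩
  exact ⟨hc, hu⟩

lemma isIndep2_insert_erase {I : Finset T.Vtx2} (hI : T.IsIndep2 I) {u v : T.Vtx2}
    (hv : ∀ y ∈ I.erase u, ¬ T.Adj2 v y) : T.IsIndep2 (insert v (I.erase u)) := by
  intro x hx y hy hxy
  rcases Finset.mem_insert.1 hx with hxv | hx' <;> rcases Finset.mem_insert.1 hy with hyv | hy'
  · exact hxy.1 (hxv.trans hyv.symm)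
  · exact hv y hy' (hxv ▸ hxy)
  · exact hv x hx' (hyv ▸ hxy.symm)
  · exact hI x (Finset.mem_of_mem_erase hx') y (Finset.mem_of_mem_erase hy') hxy

lemma wsum2_insert_erase {I : Finset T.Vtx2} {u v : T.Vtx2} (hu : u ∈ I) (hv : v ∉ I) :
    T.wsum2 (insert v (I.erase u)) = T.wsum2 I - (u.1.2.2.2 - u.1.2.2.1) * T.w u.1.1
      + (v.1.2.2.2 - v.1.2.2.1) * T.w v.1.1 := by
  rw [wsum2, wsum2, Finset.sum_insert (fun h => hv (Finset.mem_of_mem_erase h)),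
    ← Finset.add_sum_erase I _ hu]
  ring

lemma exists_first_conflict_start_after (ℓ : L) {p : ℝ × ℝ} {s : ℝ} (hs : s < p.2) :
    ∃ t', s < t' ∧ t' ≤ p.2 ∧
      (t' = p.2 ∨ ∃ ℓ', ∃ d ∈ T.C ℓ ℓ', p.1 ≤ d.1 ∧ d.2 ≤ p.2 ∧ d.1 = t') ∧
      ∀ ℓ', ∀ d ∈ T.C ℓ ℓ', p.1 ≤ d.1 → d.2 ≤ p.2 → s < d.1 → t' ≤ d.1 := by
  classical
  set E : Finset ℝ := insert p.2 (((Finset.univ.biUnion (T.C ℓ)).filter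
    fun d => p.1 ≤ d.1 ∧ d.2 ≤ p.2 ∧ s < d.1).image Prod.fst)
  have hE : E.Nonempty := Finset.insert_nonempty _ _
  have hmem := E.min'_mem hE
  simp only [E, Finset.mem_insert, Finset.mem_image, Finset.mem_filter, Finset.mem_biUnion,
    Finset.mem_univ, true_and] at hmem
  refine ⟨E.min' hE, ?_, E.min'_le _ (Finset.mem_insert_self _ _), ?_, ?_⟩
  · obtain h | ⟨d, ⟨-, -, -, hsd⟩, hd⟩ := hmem
    · exact h ▸ hs
    · exact hd ▸ hsd
  · obtain h | ⟨d, ⟨⟨ℓ', hd⟩, hpd₁, hpd₂, -⟩, hdt⟩ := hmem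
    · exact Or.inl h
    · exact Or.inr ⟨ℓ', d, hd, hpd₁, hpd₂, hdt⟩
  · intro ℓ' d hd hpd₁ hpd₂ hsd
    exact E.min'_le _ (Finset.mem_insert_of_mem
      (Finset.mem_image_of_mem _ (by simpa using ⟨⟨ℓ', hd⟩, hpd₁, hpd₂, hsd⟩)))

lemma inConflict_or_witness_of_inConflict_prolongation {ℓ ℓ' : L} {p q B : ℝ × ℝ} {s t' : ℝ}
    (hp : p ∈ T.P ℓ) (ht'p : t' ≤ p.2)
    (hfirst : ∀ d ∈ T.C ℓ ℓ', p.1 ≤ d.1 → d.2 ≤ p.2 → s < d.1 → t' ≤ d.1)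
    (hq : q ∈ T.P ℓ') (hqB₁ : B.1 = q.1) (hqB₂ : B.2 ≤ q.2)
    (hconf : T.InConflict ℓ ℓ' (p.1, t') B) :
    T.InConflict ℓ ℓ' (p.1, s) B ∨ (B.1 ≤ s ∧ s ≤ B.2 ∧ ∃ d ∈ T.C ℓ ℓ', d.1 = s) := by
  obtain ⟨t, hpt, htt', hBt, htB, d, hd, hdt, htd⟩ := hconf
  rcases lt_or_ge t s with hts | hst
  · exact Or.inl ⟨t, hpt, hts, hBt, htB, d, hd, hdt, htd⟩
  obtain ⟨hpd₁, hpd₂⟩ := T.C_subset_P hd hp ⟨hdt, htd⟩ ⟨hpt.le, htt'.le.trans ht'p⟩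
  have hds : d.1 ≤ s := by
    by_contra! hsd
    exact (hfirst d hd hpd₁ hpd₂ hsd).not_gt (hdt.trans_lt htt')
  have hBd : B.1 ≤ d.1 := hqB₁ ▸ (T.C_subset_P (T.C_symm ℓ ℓ' ▸ hd) hq ⟨hdt, htd⟩
    ⟨hqB₁ ▸ hBt.le, htB.le.trans hqB₂⟩).1
  rcases hds.eq_or_lt with hds | hds
  · exact Or.inr ⟨hBd.trans hds.le, hst.trans htB.le, d, hd, hds⟩
  · -- a time just before `s` already lies in `d`, in `(p.1, s)` and in `B`
    have hm := max_lt (hBd.trans_lt hds) hds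
    refine Or.inl ⟨(max B.1 d.1 + s) / 2, ?_, ?_, ?_, ?_, d, hd, ?_, ?_⟩ <;>
      linarith [le_max_left B.1 d.1, le_max_right B.1 d.1]

variable {T} in
theorem Saturated2.exists_end_witness {I : Finset T.Vtx2} (hind : T.IsIndep2 I)
    (hsat : T.Saturated2 I) {ℓ : L} {p A : ℝ × ℝ} (hc : T.IsCandidate2 ℓ p A)
    (hu : (⟨(ℓ, p, A), hc⟩ : T.Vtx2) ∈ I) (hend : A.2 ≠ p.2) :
    ∃ ℓ', ℓ' ≠ ℓ ∧ (∃ B ∈ T.toActivity2 I ℓ', B.1 ≤ A.2 ∧ A.2 ≤ B.2) ∧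
      ∃ d ∈ T.C ℓ ℓ', d.1 = A.2 := by
  by_contra hnone
  obtain ⟨⟨hp, hps, -, hsp, -⟩, hA₁⟩ := id hc
  obtain ⟨A₁, s⟩ := A
  obtain rfl : A₁ = p.1 := hA₁
  obtain ⟨t', hst', ht'p, ht'end, hfirst⟩ :=
    T.exists_first_conflict_start_after ℓ (lt_of_le_of_ne hsp hend)
  set u : T.Vtx2 := ⟨(ℓ, p, (p.1, s)), hc⟩
  set v : T.Vtx2 := ⟨(ℓ, p, (p.1, t')),
    ⟨⟨hp, hps.trans hst'.le, le_rfl, ht'p, Or.inl rfl, ht'end⟩, rfl⟩⟩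
  have huv : u ≠ v := fun h => hst'.ne (congrArg (fun x : T.Vtx2 => x.1.2.2.2) h)
  have hvI : v ∉ I := fun hv => hind u hu v hv ⟨huv, Or.inl ⟨rfl, rfl⟩⟩
  have hv : ∀ y ∈ I.erase u, ¬ T.Adj2 v y := by
    rintro ⟨⟨ℓ', q, B⟩, hy⟩ hyI ⟨-, hvy⟩
    obtain ⟨hyu, hyI⟩ := Finset.mem_erase.1 hyI
    rcases hvy with hvy | ⟨hℓ, hconf⟩
    · exact hind u hu _ hyI ⟨hyu.symm, Or.inl hvy⟩
    obtain ⟨⟨hq, -, -, hBq, -⟩, hqB⟩ := id hy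
    rcases T.inConflict_or_witness_of_inConflict_prolongation hp ht'p (hfirst ℓ') hq hqB hBq
      hconf with hconf | ⟨hBs, hsB, hd⟩
    · exact hind u hu _ hyI ⟨hyu.symm, Or.inr ⟨hℓ, hconf⟩⟩
    · exact hnone ⟨ℓ', Ne.symm hℓ, ⟨B, T.mem_toActivity2.2 ⟨_, hyI, rfl, rfl⟩, hBs, hsB⟩, hd⟩
  refine hsat ⟨u, hu, v, hvI, ⟨rfl, rfl⟩, T.isIndep2_insert_erase hind hv, ?_⟩
  rw [T.wsum2_insert_erase hu hvI]
  have := mul_lt_mul_of_pos_right (sub_lt_sub_right hst' p.1) (T.w_pos ℓ)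
  dsimp only [u, v]
  linarith

theorem valid_toActivity2 {I : Finset T.Vtx2} (hind : T.IsIndep2 I) :
    T.Valid (T.toActivity2 I) := by
  refine ⟨?_, ?_, ?_⟩
  · intro ℓ A hA
    obtain ⟨⟨⟨ℓ, p, A⟩, ⟨hp, hA, hpA₁, hpA₂, -⟩, -⟩, -, rfl, rfl⟩ := T.mem_toActivity2.1 hA
    exact ⟨hA, p, hp, hpA₁, hpA₂⟩
  · intro ℓ p hp A hA B hB hpA₁ hpA₂ hpB₁ hpB₂
    obtain ⟨hcA, hA⟩ := T.exists_mk_mem_of_mem_toActivity2 hA hp hpA₁ hpA₂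
    obtain ⟨hcB, hB⟩ := T.exists_mk_mem_of_mem_toActivity2 hB hp hpB₁ hpB₂
    by_contra hAB
    exact hind _ hA _ hB ⟨fun h => hAB (congrArg (fun x : T.Vtx2 => x.1.2.2) h), Or.inl ⟨rfl, rfl⟩⟩
  · intro ℓ ℓ' hℓ A hA B hB hconf
    obtain ⟨u, hu, rfl, rfl⟩ := T.mem_toActivity2.1 hA
    obtain ⟨v, hv, rfl, rfl⟩ := T.mem_toActivity2.1 hB
    exact hind u hu v hv ⟨fun h => hℓ (congrArg (fun x : T.Vtx2 => x.1.1) h), Or.inr ⟨hℓ, hconf⟩⟩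

theorem toActivity2_start_eq (I : Finset T.Vtx2) {ℓ : L} {A p : ℝ × ℝ}
    (hA : A ∈ T.toActivity2 I ℓ) (hp : p ∈ T.P ℓ) (hpA₁ : p.1 ≤ A.1) (hpA₂ : A.2 ≤ p.2) :
    A.1 = p.1 :=
  (T.exists_mk_mem_of_mem_toActivity2 hA hp hpA₁ hpA₂).1.2

theorem justified_toActivity2 {I : Finset T.Vtx2} (hind : T.IsIndep2 I)
    (hsat : T.Saturated2 I) : T.Justified (T.toActivity2 I) := by
  intro ℓ A hA p hp hpA₁ hpA₂
  obtain ⟨hc, hu⟩ := T.exists_mk_mem_of_mem_toActivity2 hA hp hpA₁ hpA₂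
  exact ⟨Or.inl hc.2, (em (A.2 = p.2)).imp_right (hsat.exists_end_witness hind hc hu)⟩

end TLInstance

/-- Every saturated independent set of the conflict graph `G_AM2`, interpreted as an
activity set by taking the candidates in the independent set as activity intervals, is a
valid activity set satisfying activity model AM2. -/
theorem stmt1 {L : Type} [Fintype L] [DecidableEq L] (T : TLInstance L)
    (I : Finset T.Vtx2) (hind : T.IsIndep2 I) (hsat : T.Saturated2 I) :
    T.AM2 (T.toActivity2 I) :=
  ⟨⟨T.valid_toActivity2 hind, T.justified_toActivity2 hind hsat⟩,
    fun _ _ hA _ hp => T.toActivity2_start_eq I hA hp⟩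
end
end

section
/- Every saturated independent set of the conflict graph G_AM1, interpreted as an activity set by taking the candidates in the independent set as activity intervals, is a valid activity set of the temporal labeling instance satisfying activity model AM1. -/
noncomputable section

namespace TLInstance

variable {L : Type} [Fintype L] [DecidableEq L] (T : TLInstance L)

/-- The vertices of the conflict graph `G_AM1`: one vertex (candidate) for each presence
interval `[a,b]` of each label `ℓ`. -/
abbrev Vtx1 := {x : L × (ℝ × ℝ) // x.2 ∈ T.P x.1}

/-- Same cluster in `G_AM1`: belonging to the same presence interval of the same label,
i.e. each cluster is a single vertex. -/
def SameCluster1 (u v : T.Vtx1) : Prop := u.1 = v.1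

/-- Adjacency in the conflict graph `G_AM1`: candidates `[s,t]` of `ℓ` and `[s',t']` of
`ℓ' ≠ ℓ` are adjacent iff some time in `(s,t) ∩ (s',t')` lies in a conflict interval of
`ℓ` and `ℓ'`. -/
def Adj1 (u v : T.Vtx1) : Prop :=
  u.1.1 ≠ v.1.1 ∧ T.InConflict u.1.1 v.1.1 u.1.2 v.1.2

/-- `I` is an independent set of `G_AM1`. -/
def IsIndep1 (I : Finset T.Vtx1) : Prop := ∀ u ∈ I, ∀ v ∈ I, ¬ T.Adj1 u v

/-- Total vertex weight in `G_AM1`: the vertex of presence interval `[a,b]` of `ℓ` has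
weight `(b - a) * w ℓ`. -/
def wsum1 (I : Finset T.Vtx1) : ℝ := ∑ v ∈ I, (v.1.2.2 - v.1.2.1) * T.w v.1.1

/-- `I` is a saturated set of vertices of `G_AM1`. -/
def Saturated1 (I : Finset T.Vtx1) : Prop :=
  ¬ ∃ v ∈ I, ∃ v' : T.Vtx1, v' ∉ I ∧ T.SameCluster1 v v' ∧
    T.IsIndep1 (insert v' (I.erase v)) ∧ T.wsum1 I < T.wsum1 (insert v' (I.erase v))

/-- The activity set obtained from a set of vertices of `G_AM1`. -/
def toActivity1 (I : Finset T.Vtx1) (ℓ : L) : Finset (ℝ × ℝ) :=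
  (I.filter (fun v => v.1.1 = ℓ)).image (fun v => v.1.2)

end TLInstance

namespace TLInstance

variable {L : Type} [Fintype L] [DecidableEq L] (T : TLInstance L)

theorem eq_of_mem_P_of_le {ℓ : L} {A p : ℝ × ℝ} (hA : A ∈ T.P ℓ) (hp : p ∈ T.P ℓ)
    (h₁ : p.1 ≤ A.1) (h₂ : A.2 ≤ p.2) : A = p := by
  by_contra hne
  have hAA : A.1 ≤ A.2 := T.P_wf ℓ A hA
  exact Set.disjoint_left.mp (T.P_disj ℓ A hA p hp hne) ⟨le_rfl, hAA⟩ ⟨h₁, hAA.trans h₂⟩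

theorem justified_of_forall_mem_P {Φ : L → Finset (ℝ × ℝ)}
    (hΦ : ∀ ℓ, ∀ A ∈ Φ ℓ, A ∈ T.P ℓ) : T.Justified Φ := by
  intro ℓ A hA p hp h₁ h₂
  obtain rfl := T.eq_of_mem_P_of_le (hΦ ℓ A hA) hp h₁ h₂
  exact ⟨Or.inl rfl, Or.inl rfl⟩

theorem valid_of_forall_mem_P {Φ : L → Finset (ℝ × ℝ)}
    (hΦ : ∀ ℓ, ∀ A ∈ Φ ℓ, A ∈ T.P ℓ)
    (hconf : ∀ ℓ ℓ', ℓ ≠ ℓ' → ∀ A ∈ Φ ℓ, ∀ B ∈ Φ ℓ', ¬ T.InConflict ℓ ℓ' A B) :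
    T.Valid Φ := by
  refine ⟨fun ℓ A hA => ⟨T.P_wf ℓ A (hΦ ℓ A hA), A, hΦ ℓ A hA, le_rfl, le_rfl⟩, ?_, hconf⟩
  intro ℓ p hp A hA B hB hA₁ hA₂ hB₁ hB₂
  rw [T.eq_of_mem_P_of_le (hΦ ℓ A hA) hp hA₁ hA₂, T.eq_of_mem_P_of_le (hΦ ℓ B hB) hp hB₁ hB₂]

theorem am1_of_forall_mem_P {Φ : L → Finset (ℝ × ℝ)}
    (hΦ : ∀ ℓ, ∀ A ∈ Φ ℓ, A ∈ T.P ℓ)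
    (hconf : ∀ ℓ ℓ', ℓ ≠ ℓ' → ∀ A ∈ Φ ℓ, ∀ B ∈ Φ ℓ', ¬ T.InConflict ℓ ℓ' A B) :
    T.AM1 Φ :=
  ⟨⟨T.valid_of_forall_mem_P hΦ hconf, T.justified_of_forall_mem_P hΦ⟩, hΦ⟩

theorem mem_toActivity1 {I : Finset T.Vtx1} {ℓ : L} {A : ℝ × ℝ} :
    A ∈ T.toActivity1 I ℓ ↔ ∃ v ∈ I, v.1.1 = ℓ ∧ v.1.2 = A := by
  simp only [toActivity1, Finset.mem_image, Finset.mem_filter, and_assoc]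

theorem mem_P_of_mem_toActivity1 {I : Finset T.Vtx1} {ℓ : L} {A : ℝ × ℝ}
    (hA : A ∈ T.toActivity1 I ℓ) : A ∈ T.P ℓ := by
  obtain ⟨v, -, rfl, rfl⟩ := T.mem_toActivity1.mp hA
  exact v.2

theorem not_inConflict_toActivity1 {I : Finset T.Vtx1} (hind : T.IsIndep1 I) {ℓ ℓ' : L}
    (hne : ℓ ≠ ℓ') {A B : ℝ × ℝ} (hA : A ∈ T.toActivity1 I ℓ) (hB : B ∈ T.toActivity1 I ℓ') :
    ¬ T.InConflict ℓ ℓ' A B := by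
  obtain ⟨u, hu, rfl, rfl⟩ := T.mem_toActivity1.mp hA
  obtain ⟨v, hv, rfl, rfl⟩ := T.mem_toActivity1.mp hB
  exact fun hc => hind u hu v hv ⟨hne, hc⟩

end TLInstance

theorem stmt2_general {L : Type} [Fintype L] [DecidableEq L] (T : TLInstance L)
    (I : Finset T.Vtx1) (hind : T.IsIndep1 I) :
    T.AM1 (T.toActivity1 I) :=
  T.am1_of_forall_mem_P (fun _ _ => T.mem_P_of_mem_toActivity1)
    (fun _ _ hne _ hA _ hB => T.not_inConflict_toActivity1 hind hne hA hB)

/-- Every saturated independent set of the conflict graph `G_AM1`, interpreted as an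
activity set by taking the candidates in the independent set as activity intervals, is a
valid activity set satisfying activity model AM1. -/
theorem stmt2 {L : Type} [Fintype L] [DecidableEq L] (T : TLInstance L)
    (I : Finset T.Vtx1) (hind : T.IsIndep1 I) (hsat : T.Saturated1 I) :
    T.AM1 (T.toActivity1 I) :=
  stmt2_general T I hind
end
end

section
/- If Φ is a valid activity set of a temporal labeling instance satisfying activity model AM3, then every activity interval [s,t] of a label ℓ, contained in a presence interval [a,b] of ℓ, is a candidate of [a,b] (that is, s = a or s is the right endpoint of a conflict interval of ℓ contained in [a,b], and t = b or t is the left endpoint of a conflict interval of ℓ contained in [a,b]); moreover, the set of vertices of the conflict graph G_AM3 corresponding to the activity intervals of Φ is an independent set of G_AM3 whose total vertex weight equals the weight of Φ. -/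
noncomputable section

namespace TLInstance

variable {L : Type} [Fintype L] [DecidableEq L] (T : TLInstance L)

theorem P_eq_of_mem_Icc {ℓ : L} {p q : ℝ × ℝ} {x : ℝ} (hp : p ∈ T.P ℓ) (hq : q ∈ T.P ℓ)
    (hxp : x ∈ Set.Icc p.1 p.2) (hxq : x ∈ Set.Icc q.1 q.2) : p = q := by
  by_contra hpq
  exact Set.disjoint_left.mp (T.P_disj ℓ p hp q hq hpq) hxp hxq

theorem C_sub_of_mem_Icc {ℓ ℓ' : L} {d p : ℝ × ℝ} {x : ℝ} (hd : d ∈ T.C ℓ ℓ')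
    (hp : p ∈ T.P ℓ) (hxd : x ∈ Set.Icc d.1 d.2) (hxp : x ∈ Set.Icc p.1 p.2) :
    p.1 ≤ d.1 ∧ d.2 ≤ p.2 := by
  obtain ⟨q, hq, hqd⟩ := T.C_sub ℓ ℓ' d hd
  obtain rfl : q = p :=
    T.P_eq_of_mem_Icc hq hp ⟨hqd.1.trans hxd.1, hxd.2.trans hqd.2⟩ hxp
  exact hqd

theorem isCandidate_of_AM3 {Φ : L → Finset (ℝ × ℝ)} (hΦ : T.AM3 Φ) {ℓ : L} {p A : ℝ × ℝ}
    (hA : A ∈ Φ ℓ) (hp : p ∈ T.P ℓ) (hpA : p.1 ≤ A.1) (hAp : A.2 ≤ p.2) :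
    T.IsCandidate ℓ p A := by
  have hA12 : A.1 ≤ A.2 := (hΦ.1.1 ℓ A hA).1
  obtain ⟨hstart, hend⟩ := hΦ.2 ℓ A hA p hp hpA hAp
  refine ⟨hp, hA12, hpA, hAp, ?_, ?_⟩
  · rcases hstart with hstart | ⟨ℓ', -, -, d, hd, hdA⟩
    · exact .inl hstart
    · have hdp := T.C_sub_of_mem_Icc hd hp ⟨T.C_wf ℓ ℓ' d hd, le_rfl⟩
        (hdA ▸ ⟨hpA, hA12.trans hAp⟩)
      exact .inr ⟨ℓ', d, hd, hdp.1, hdp.2, hdA⟩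
  · rcases hend with hend | ⟨ℓ', -, -, d, hd, hdA⟩
    · exact .inl hend
    · have hdp := T.C_sub_of_mem_Icc hd hp ⟨le_rfl, T.C_wf ℓ ℓ' d hd⟩
        (hdA ▸ ⟨hpA.trans hA12, hAp⟩)
      exact .inr ⟨ℓ', d, hd, hdp.1, hdp.2, hdA⟩

theorem vtx_eq_of_label_eq_of_interval_eq {u v : T.Vtx} (hℓ : u.1.1 = v.1.1)
    (hA : u.1.2.2 = v.1.2.2) : u = v := by
  obtain ⟨hpu, hu12, hu1, hu2, -⟩ := u.2
  obtain ⟨hpv, hv12, hv1, hv2, -⟩ := v.2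
  refine Subtype.ext (Prod.ext hℓ (Prod.ext ?_ hA))
  rw [hℓ] at hpu
  rw [← hA] at hv1 hv12 hv2
  exact T.P_eq_of_mem_Icc hpu hpv ⟨hu1, hu12.trans hu2⟩ ⟨hv1, hv12.trans hv2⟩

def activityVtx (Φ : L → Finset (ℝ × ℝ)) : Finset T.Vtx :=
  (Finset.univ.biUnion fun ℓ => (T.P ℓ ×ˢ Φ ℓ).image (Prod.mk ℓ)).preimage Subtype.val
    Subtype.val_injective.injOn

theorem mem_activityVtx (Φ : L → Finset (ℝ × ℝ)) (v : T.Vtx) :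
    v ∈ T.activityVtx Φ ↔ v.1.2.2 ∈ Φ v.1.1 := by
  simp only [activityVtx, Finset.mem_preimage, Finset.mem_biUnion, Finset.mem_univ, true_and,
    Finset.mem_image, Finset.mem_product]
  constructor
  · rintro ⟨ℓ, ⟨p, A⟩, ⟨-, hA⟩, hv⟩
    rwa [← hv]
  · exact fun hA => ⟨v.1.1, v.1.2, ⟨v.2.1, hA⟩, rfl⟩

theorem isIndep_of_valid {Φ : L → Finset (ℝ × ℝ)} (hΦ : T.Valid Φ) {S : Finset T.Vtx}
    (hS : ∀ v ∈ S, v.1.2.2 ∈ Φ v.1.1) : T.IsIndep S := by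
  rintro u hu v hv ⟨huv, ⟨hℓ, hp⟩ | ⟨hℓ, hconf⟩⟩
  · obtain ⟨hpu, -, hu1, hu2, -⟩ := u.2
    obtain ⟨-, -, hv1, hv2, -⟩ := v.2
    refine huv (T.vtx_eq_of_label_eq_of_interval_eq hℓ ?_)
    exact hΦ.2.1 u.1.1 u.1.2.1 hpu _ (hS u hu) _ (hℓ ▸ hS v hv) hu1 hu2 (hp ▸ hv1) (hp ▸ hv2)
  · exact hΦ.2.2 u.1.1 v.1.1 hℓ _ (hS u hu) _ (hS v hv) hconf

theorem wsum_eq_weightOf {Φ : L → Finset (ℝ × ℝ)}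
    (hΦ : ∀ ℓ, ∀ A ∈ Φ ℓ, ∃ p, T.IsCandidate ℓ p A) {S : Finset T.Vtx}
    (hS : ∀ v, v ∈ S ↔ v.1.2.2 ∈ Φ v.1.1) : T.wsum S = T.weightOf Φ := by
  rw [wsum, weightOf, ← Finset.sum_fiberwise S (fun v => v.1.1)]
  refine Finset.sum_congr rfl fun ℓ _ => ?_
  refine Finset.sum_bij (fun v _ => v.1.2.2) ?_ ?_ ?_ ?_
  · intro v hv
    obtain ⟨hvS, rfl⟩ := Finset.mem_filter.mp hv
    exact (hS v).mp hvS
  · intro u hu v hv huv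
    exact T.vtx_eq_of_label_eq_of_interval_eq
      ((Finset.mem_filter.mp hu).2.trans (Finset.mem_filter.mp hv).2.symm) huv
  · intro A hA
    obtain ⟨p, hpA⟩ := hΦ ℓ A hA
    exact ⟨⟨(ℓ, p, A), hpA⟩, Finset.mem_filter.mpr ⟨(hS _).mpr hA, rfl⟩, rfl⟩
  · intro v hv
    rw [(Finset.mem_filter.mp hv).2]

end TLInstance


/-- If `Φ` is a valid activity set satisfying AM3, then every activity interval `[s,t]` of
a label `ℓ`, contained in a presence interval `[a,b]` of `ℓ`, is a candidate of `[a,b]`;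
moreover, the set of vertices of `G_AM3` corresponding to the activity intervals of `Φ` is
an independent set of `G_AM3` whose total vertex weight equals the weight of `Φ`. -/
theorem stmt11 {L : Type} [Fintype L] [DecidableEq L] (T : TLInstance L)
    (Φ : L → Finset (ℝ × ℝ)) (h : T.AM3 Φ) :
    (∀ ℓ, ∀ A ∈ Φ ℓ, ∀ p ∈ T.P ℓ, p.1 ≤ A.1 → A.2 ≤ p.2 → T.IsCandidate ℓ p A) ∧
    ∃ S : Finset T.Vtx, (∀ v : T.Vtx, v ∈ S ↔ v.1.2.2 ∈ Φ v.1.1) ∧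
      T.IsIndep S ∧ T.wsum S = T.weightOf Φ := by
  have hcand : ∀ ℓ, ∀ A ∈ Φ ℓ, ∀ p ∈ T.P ℓ, p.1 ≤ A.1 → A.2 ≤ p.2 → T.IsCandidate ℓ p A :=
    fun ℓ A hA p hp hpA hAp => T.isCandidate_of_AM3 h hA hp hpA hAp
  have hexists : ∀ ℓ, ∀ A ∈ Φ ℓ, ∃ p, T.IsCandidate ℓ p A := fun ℓ A hA => by
    obtain ⟨-, p, hp, hpA, hAp⟩ := h.1.1 ℓ A hA
    exact ⟨p, hcand ℓ A hA p hp hpA hAp⟩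
  exact ⟨hcand, T.activityVtx Φ, T.mem_activityVtx Φ,
    T.isIndep_of_valid h.1 fun v => (T.mem_activityVtx Φ v).mp,
    T.wsum_eq_weightOf hexists (T.mem_activityVtx Φ)⟩
end
end
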